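/- Let f : ℝ^{m×n} → ℝ be convex and differentiable, and let X* be an optimal solution of min_{‖X‖_* ≤ 1} f(X) with singular value decomposition X* = Σ_{i=1}^r σ_i u_i v_iᵀ (σ_i > 0). Then for every i ∈ {1, …, r}, −u_iᵀ ∇f(X*) v_i = σ_1(∇f(X*)); that is, the pairs (−u_i, v_i), i = 1, …, r, are all singular-vector pairs of ∇f(X*) corresponding to its largest singular value σ_1(∇f(X*)). -/

import Mathlib

/- Common definitions: Frobenius norm and inner product, singular values in
non-increasing order, trace (nuclear) norm, multiplicity of the top singular
value, Euclidean projection onto the trace-norm ball, the spectrahedron and its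
projection, sorted eigenvalues of symmetric matrices, best rank-`r`
approximations, and the singular-value soft-thresholding (prox) operator. -/

open scoped BigOperators
open Matrix MeasureTheory ProbabilityTheory

attribute [local instance] Matrix.normedAddCommGroup Matrix.normedSpace

noncomputable section

/-- Frobenius norm of a real matrix. -/
def frobNorm {m n : ℕ} (X : Matrix (Fin m) (Fin n) ℝ) : ℝ :=
  Real.sqrt (∑ i, ∑ j, (X i j) ^ 2)

/-- Frobenius inner product of two real matrices. -/
def frobInner {m n : ℕ} (A B : Matrix (Fin m) (Fin n) ℝ) : ℝ :=
  ∑ i, ∑ j, A i j * B i j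

/-- The continuous linear functional `H ↦ ⟨G, H⟩` (Frobenius inner product);
`HasFDerivAt f (frobCLM G) X` says that `G` is the gradient of `f` at `X`. -/
def frobCLM {m n : ℕ} (G : Matrix (Fin m) (Fin n) ℝ) :
    Matrix (Fin m) (Fin n) ℝ →L[ℝ] ℝ :=
  LinearMap.toContinuousLinearMap
    { toFun := fun H => frobInner G H
      map_add' := fun x y => by
        simp [frobInner, Matrix.add_apply, mul_add, Finset.sum_add_distrib]
      map_smul' := fun c x => by
        simp [frobInner, Matrix.smul_apply, smul_eq_mul, Finset.mul_sum, mul_left_comm] }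

/-- The non-increasing (descending) rearrangement of a finite tuple of reals. -/
def sortedDesc {N : ℕ} (f : Fin N → ℝ) : Fin N → ℝ :=
  fun i => f (Tuple.sort f i.rev)

/-- The singular values of a real `m × n` matrix in non-increasing order
(the square roots of the eigenvalues of `Xᵀ * X`), padded with zeros so that
there are `n` of them. -/
def svalsFin {m n : ℕ} (X : Matrix (Fin m) (Fin n) ℝ) : Fin n → ℝ :=
  sortedDesc (fun i => Real.sqrt ((show (Xᵀ * X).IsHermitian by
    simpa using Matrix.isHermitian_conjTranspose_mul_self X).eigenvalues i))

/-- `svalI X i` is the `(i+1)`-th largest singular value of `X` (i.e. `0`-indexed: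
`svalI X 0 = σ₁(X)`), interpreted as `0` when the index is out of range. -/
def svalI {m n : ℕ} (X : Matrix (Fin m) (Fin n) ℝ) (i : ℕ) : ℝ :=
  if h : i < n then svalsFin X ⟨i, h⟩ else 0

/-- The trace norm (nuclear norm): the sum of the singular values. -/
def traceNorm {m n : ℕ} (X : Matrix (Fin m) (Fin n) ℝ) : ℝ :=
  ∑ i, svalsFin X i

/-- `#σ₁(X)`: the multiplicity of the largest singular value of `X`. -/
def multTop {m n : ℕ} (X : Matrix (Fin m) (Fin n) ℝ) : ℕ :=
  Nat.card {i : Fin n // svalsFin X i = svalI X 0}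

/-- `P` is the Euclidean (Frobenius) projection of `X` onto the trace-norm ball
of radius `τ`. -/
def IsTraceBallProj {m n : ℕ} (τ : ℝ) (X P : Matrix (Fin m) (Fin n) ℝ) : Prop :=
  traceNorm P ≤ τ ∧ ∀ Z, traceNorm Z ≤ τ → frobNorm (X - P) ≤ frobNorm (X - Z)

/-- The Euclidean projection onto the trace-norm ball of radius `τ`. -/
def projTraceBall {m n : ℕ} (τ : ℝ) (X : Matrix (Fin m) (Fin n) ℝ) :
    Matrix (Fin m) (Fin n) ℝ :=
  open scoped Classical in
  if h : ∃ P, IsTraceBallProj τ X P then h.choose else 0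

/-- `Y` is a best rank-`r` approximation of `X` in Frobenius norm. -/
def IsBestRankApprox {m n : ℕ} (r : ℕ) (X Y : Matrix (Fin m) (Fin n) ℝ) : Prop :=
  Y.rank ≤ r ∧ ∀ Z : Matrix (Fin m) (Fin n) ℝ, Z.rank ≤ r → frobNorm (X - Y) ≤ frobNorm (X - Z)

/-- The spectrahedron: positive semidefinite matrices of unit trace. -/
def SpectraSet (n : ℕ) : Set (Matrix (Fin n) (Fin n) ℝ) :=
  {X | X.PosSemidef ∧ X.trace = 1}

/-- `P` is the Euclidean (Frobenius) projection of `X` onto the spectrahedron. -/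
def IsSpectraProj {n : ℕ} (X P : Matrix (Fin n) (Fin n) ℝ) : Prop :=
  P ∈ SpectraSet n ∧ ∀ Z ∈ SpectraSet n, frobNorm (X - P) ≤ frobNorm (X - Z)

/-- The Euclidean projection onto the spectrahedron. -/
def projSpectra {n : ℕ} (X : Matrix (Fin n) (Fin n) ℝ) : Matrix (Fin n) (Fin n) ℝ :=
  open scoped Classical in
  if h : ∃ P, IsSpectraProj X P then h.choose else 0

/-- `evalI X i` is the `(i+1)`-th largest eigenvalue of the symmetric matrix `X`
(`0`-indexed: `evalI X 0 = λ₁(X)`, `evalI X (n-1) = λ_n(X)`); junk value `0` if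
`X` is not symmetric or the index is out of range. -/
def evalI {n : ℕ} (X : Matrix (Fin n) (Fin n) ℝ) (i : ℕ) : ℝ :=
  open scoped Classical in
  if h : i < n then
    (if hX : X.IsHermitian then sortedDesc hX.eigenvalues ⟨i, h⟩ else 0)
  else 0

/-- The multiplicity of the smallest eigenvalue of a symmetric matrix. -/
def multMinEig {n : ℕ} (X : Matrix (Fin n) (Fin n) ℝ) : ℕ :=
  Nat.card {i : Fin n // evalI X i = evalI X (n - 1)}

/-- `Y` is the value at `X` of the singular-value soft-thresholding operator
`𝒯_η`, characterized as the proximal mapping of `η‖·‖_*`: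
the (unique) minimizer of `Z ↦ ½‖X − Z‖_F² + η‖Z‖_*`. -/
def IsSVT {m n : ℕ} (η : ℝ) (X Y : Matrix (Fin m) (Fin n) ℝ) : Prop :=
  ∀ Z : Matrix (Fin m) (Fin n) ℝ,
    frobNorm (X - Y) ^ 2 / 2 + η * traceNorm Y ≤ frobNorm (X - Z) ^ 2 / 2 + η * traceNorm Z

/-- The singular-value soft-thresholding operator `𝒯_η`. -/
def softThresh {m n : ℕ} (η : ℝ) (X : Matrix (Fin m) (Fin n) ℝ) :
    Matrix (Fin m) (Fin n) ℝ :=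
  open scoped Classical in
  if h : ∃ Y, IsSVT η X Y then h.choose else 0

instance {m n : ℕ} : MeasurableSpace (Matrix (Fin m) (Fin n) ℝ) :=
  inferInstanceAs (MeasurableSpace (Fin m → Fin n → ℝ))

end

/-! Write `G = ∇f(X*)` and `cᵢ = uᵢᵀ G vᵢ`. Expanding vectors in the singular vectors of a matrix
gives two duality bounds: `xᵀ G y ≤ σ₁(G)` for unit `x, y`, and `∑ᵢ pᵢᵀ A qᵢ ≤ ‖A‖_*` for
orthonormal (more generally, Bessel) families `(pᵢ)`, `(qᵢ)`, with equality when these are the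
singular vectors of `A`. The first gives `cᵢ ≥ -σ₁(G)`; the second gives `∑ σᵢ ≤ ‖X*‖_* ≤ 1`,
convexity of `‖·‖_*`, and `‖x yᵀ‖_* ≤ 1` for a top singular pair `(x, y)` of `G`. First-order
optimality tested against the feasible point `-x yᵀ` yields `∑ σᵢ cᵢ = ⟨G, X*⟩ ≤ -σ₁(G)`, hence
`∑ σᵢ (cᵢ + σ₁(G)) ≤ 0`: a sum of nonnegative terms with positive weights, so each `cᵢ = -σ₁(G)`. -/

section BesselFamily

variable {ι κ : Type*} [Fintype ι] [Fintype κ]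

def IsBesselFamily (p : ι → κ → ℝ) : Prop :=
  ∀ x, ∑ i, (p i ⬝ᵥ x) ^ 2 ≤ x ⬝ᵥ x

theorem isBesselFamily_of_orthogonal {p : ι → κ → ℝ}
    (horth : Pairwise fun i j => p i ⬝ᵥ p j = 0) (hle : ∀ i, p i ⬝ᵥ p i ≤ 1) :
    IsBesselFamily p := by
  intro x
  set c : ι → ℝ := fun i => p i ⬝ᵥ x
  set y := ∑ i, c i • p i
  have hxy : x ⬝ᵥ y = ∑ i, c i ^ 2 := by
    simp only [y, dotProduct_sum, dotProduct_smul, smul_eq_mul, c, sq]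
    exact Finset.sum_congr rfl fun i _ => by rw [dotProduct_comm]
  have hyy : y ⬝ᵥ y = ∑ i, c i ^ 2 * (p i ⬝ᵥ p i) := by
    simp only [y, dotProduct_sum, sum_dotProduct, dotProduct_smul, smul_dotProduct, smul_eq_mul]
    refine Finset.sum_congr rfl fun i _ => ?_
    rw [Finset.sum_eq_single i (fun j _ hji => by rw [horth hji]; ring) (by simp)]
    ring
  have hyy_le : y ⬝ᵥ y ≤ ∑ i, c i ^ 2 := by
    rw [hyy]
    exact Finset.sum_le_sum fun i _ => mul_le_of_le_one_right (sq_nonneg _) (hle i)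
  have hnonneg : 0 ≤ (x - y) ⬝ᵥ (x - y) := by
    simpa using dotProduct_self_star_nonneg (x - y)
  rw [sub_dotProduct, dotProduct_sub, dotProduct_sub, dotProduct_comm y x, hxy] at hnonneg
  linarith

theorem isBesselFamily_of_orthonormal [DecidableEq ι] {p : ι → κ → ℝ}
    (h : ∀ i j, p i ⬝ᵥ p j = if i = j then 1 else 0) : IsBesselFamily p :=
  isBesselFamily_of_orthogonal (fun i j hij => by simp [h, hij]) (fun i => by simp [h])

theorem IsBesselFamily.sum_abs_mul_abs_le_one {κ' : Type*} [Fintype κ'] {p : ι → κ → ℝ}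
    {q : ι → κ' → ℝ} (hp : IsBesselFamily p) (hq : IsBesselFamily q) {x : κ → ℝ} {y : κ' → ℝ}
    (hx : x ⬝ᵥ x ≤ 1) (hy : y ⬝ᵥ y ≤ 1) : ∑ i, |p i ⬝ᵥ x| * |q i ⬝ᵥ y| ≤ 1 := by
  refine (Real.sum_mul_le_sqrt_mul_sqrt _ _ _).trans ?_
  simp only [sq_abs]
  refine mul_le_one₀ ?_ (Real.sqrt_nonneg _) ?_ <;> rw [Real.sqrt_le_one]
  exacts [(hp x).trans hx, (hq y).trans hy]

end BesselFamily

namespace Matrix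

variable {m n : Type*} [Fintype m]

theorem isHermitian_transpose_mul_self (A : Matrix m n ℝ) : (Aᵀ * A).IsHermitian := by
  simpa using isHermitian_conjTranspose_mul_self A

variable [Fintype n] [DecidableEq n]

noncomputable def singularValue (A : Matrix m n ℝ) (k : n) : ℝ :=
  √((isHermitian_transpose_mul_self A).eigenvalues k)

noncomputable def rightSingularVector (A : Matrix m n ℝ) (k : n) : n → ℝ :=
  ⇑((isHermitian_transpose_mul_self A).eigenvectorBasis k)

/-- When `A.singularValue k = 0`, the factor `0⁻¹ = 0` makes this the zero vector. -/
noncomputable def leftSingularVector (A : Matrix m n ℝ) (k : n) : m → ℝ :=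
  (A.singularValue k)⁻¹ • (A *ᵥ A.rightSingularVector k)

variable (A : Matrix m n ℝ)

theorem singularValue_nonneg (k : n) : 0 ≤ A.singularValue k := Real.sqrt_nonneg _

theorem rightSingularVector_dotProduct (k l : n) :
    A.rightSingularVector k ⬝ᵥ A.rightSingularVector l = if k = l then 1 else 0 := by
  have h := orthonormal_iff_ite.1
    (isHermitian_transpose_mul_self A).eigenvectorBasis.orthonormal k l
  simpa [PiLp.inner_apply, dotProduct, mul_comm, rightSingularVector] using h

theorem sum_dotProduct_rightSingularVector_smul (x : n → ℝ) :
    ∑ k, (A.rightSingularVector k ⬝ᵥ x) • A.rightSingularVector k = x := by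
  have h := congrArg WithLp.ofLp
    ((isHermitian_transpose_mul_self A).eigenvectorBasis.sum_repr' (WithLp.toLp 2 x))
  simpa [PiLp.inner_apply, dotProduct, mul_comm, rightSingularVector] using h

theorem transpose_mul_self_mulVec_rightSingularVector (k : n) :
    (Aᵀ * A) *ᵥ A.rightSingularVector k = A.singularValue k ^ 2 • A.rightSingularVector k := by
  have hpsd : (Aᵀ * A).PosSemidef := by simpa using posSemidef_conjTranspose_mul_self A
  rw [singularValue, Real.sq_sqrt (hpsd.eigenvalues_nonneg k)]
  exact (isHermitian_transpose_mul_self A).mulVec_eigenvectorBasis k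

theorem mulVec_rightSingularVector_dotProduct (k l : n) :
    (A *ᵥ A.rightSingularVector k) ⬝ᵥ (A *ᵥ A.rightSingularVector l) =
      if k = l then A.singularValue k ^ 2 else 0 := by
  rw [dotProduct_mulVec, ← transpose_transpose A, ← vecMul_transpose, transpose_transpose,
    vecMul_vecMul, ← dotProduct_mulVec, transpose_mul_self_mulVec_rightSingularVector,
    dotProduct_smul, rightSingularVector_dotProduct]
  split_ifs with h <;> simp [h]

theorem mulVec_rightSingularVector (k : n) :
    A *ᵥ A.rightSingularVector k = A.singularValue k • A.leftSingularVector k := by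
  rcases eq_or_ne (A.singularValue k) 0 with h | h
  · have hsq := A.mulVec_rightSingularVector_dotProduct k k
    simp only [h, ne_eq, OfNat.ofNat_ne_zero, not_false_eq_true, zero_pow] at hsq
    simpa [h] using dotProduct_self_eq_zero.1 hsq
  · rw [leftSingularVector, smul_smul, mul_inv_cancel₀ h, one_smul]

theorem leftSingularVector_dotProduct (k l : n) :
    A.leftSingularVector k ⬝ᵥ A.leftSingularVector l =
      if k = l ∧ A.singularValue k ≠ 0 then 1 else 0 := by
  rw [leftSingularVector, leftSingularVector, smul_dotProduct, dotProduct_smul,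
    mulVec_rightSingularVector_dotProduct]
  by_cases hkl : k = l
  · subst hkl
    rcases eq_or_ne (A.singularValue k) 0 with h | h
    · simp [h]
    · simp [h]
      field_simp
  · simp [hkl]

theorem rightSingularVector_dotProduct_self (k : n) :
    A.rightSingularVector k ⬝ᵥ A.rightSingularVector k = 1 := by
  simp [rightSingularVector_dotProduct]

theorem leftSingularVector_dotProduct_self_le_one (k : n) :
    A.leftSingularVector k ⬝ᵥ A.leftSingularVector k ≤ 1 := by
  rw [leftSingularVector_dotProduct]; split_ifs <;> norm_num

theorem leftSingularVector_dotProduct_mulVec_rightSingularVector (k : n) :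
    A.leftSingularVector k ⬝ᵥ (A *ᵥ A.rightSingularVector k) = A.singularValue k := by
  rw [mulVec_rightSingularVector, dotProduct_smul, leftSingularVector_dotProduct, smul_eq_mul]
  by_cases h : A.singularValue k = 0 <;> simp [h]

theorem isBesselFamily_rightSingularVector : IsBesselFamily A.rightSingularVector :=
  isBesselFamily_of_orthonormal A.rightSingularVector_dotProduct

theorem isBesselFamily_leftSingularVector : IsBesselFamily A.leftSingularVector :=
  isBesselFamily_of_orthogonal (fun k l hkl => by simp [leftSingularVector_dotProduct, hkl])
    A.leftSingularVector_dotProduct_self_le_one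

theorem dotProduct_mulVec_eq_sum (x : m → ℝ) (y : n → ℝ) :
    x ⬝ᵥ (A *ᵥ y) = ∑ k, A.singularValue k *
      ((A.leftSingularVector k ⬝ᵥ x) * (A.rightSingularVector k ⬝ᵥ y)) := by
  conv_lhs => rw [← A.sum_dotProduct_rightSingularVector_smul y]
  simp only [mulVec_sum, mulVec_smul, mulVec_rightSingularVector, dotProduct_sum,
    dotProduct_smul, smul_eq_mul]
  exact Finset.sum_congr rfl fun k _ => by rw [dotProduct_comm x]; ring

end Matrix

section TraceNorm

variable {m n : ℕ}

theorem traceNorm_eq_sum_singularValue (A : Matrix (Fin m) (Fin n) ℝ) :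
    traceNorm A = ∑ k, A.singularValue k :=
  Equiv.sum_comp (Fin.revPerm.trans (Tuple.sort A.singularValue)) A.singularValue

theorem svalI_zero_eq_singularValue_sort (A : Matrix (Fin m) (Fin n) ℝ) (hn : 0 < n) :
    svalI A 0 = A.singularValue (Tuple.sort A.singularValue (Fin.rev ⟨0, hn⟩)) := by
  simp only [svalI, dif_pos hn]
  rfl

theorem singularValue_le_svalI_zero (A : Matrix (Fin m) (Fin n) ℝ) (k : Fin n) :
    A.singularValue k ≤ svalI A 0 := by
  rw [svalI_zero_eq_singularValue_sort A k.pos]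
  have hk : (Tuple.sort A.singularValue).symm k ≤ Fin.rev ⟨0, k.pos⟩ := by
    have := ((Tuple.sort A.singularValue).symm k).is_lt
    simp only [Fin.le_def, Fin.val_rev]
    omega
  simpa using Tuple.monotone_sort A.singularValue hk

theorem exists_singularValue_eq_svalI_zero (A : Matrix (Fin m) (Fin n) ℝ) (hn : 0 < n) :
    ∃ k, A.singularValue k = svalI A 0 :=
  ⟨_, (svalI_zero_eq_singularValue_sort A hn).symm⟩

theorem svalI_zero_nonneg (A : Matrix (Fin m) (Fin n) ℝ) : 0 ≤ svalI A 0 := by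
  rcases Nat.eq_zero_or_pos n with hn | hn
  · simp [svalI, hn]
  · obtain ⟨k, hk⟩ := exists_singularValue_eq_svalI_zero A hn
    exact hk ▸ A.singularValue_nonneg k

theorem exists_dotProduct_mulVec_eq_svalI_zero (A : Matrix (Fin m) (Fin n) ℝ) :
    ∃ x y, x ⬝ᵥ x ≤ 1 ∧ y ⬝ᵥ y ≤ 1 ∧ x ⬝ᵥ (A *ᵥ y) = svalI A 0 := by
  rcases Nat.eq_zero_or_pos n with hn | hn
  · exact ⟨0, 0, by simp, by simp, by simp [svalI, hn]⟩
  · obtain ⟨k, hk⟩ := exists_singularValue_eq_svalI_zero A hn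
    exact ⟨_, _, A.leftSingularVector_dotProduct_self_le_one k,
      (A.rightSingularVector_dotProduct_self k).le,
      (A.leftSingularVector_dotProduct_mulVec_rightSingularVector k).trans hk⟩

theorem dotProduct_mulVec_le_svalI_zero (A : Matrix (Fin m) (Fin n) ℝ) {x : Fin m → ℝ}
    {y : Fin n → ℝ} (hx : x ⬝ᵥ x ≤ 1) (hy : y ⬝ᵥ y ≤ 1) : x ⬝ᵥ (A *ᵥ y) ≤ svalI A 0 := by
  rw [A.dotProduct_mulVec_eq_sum]
  calc _ ≤ ∑ k, svalI A 0 *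
          (|A.leftSingularVector k ⬝ᵥ x| * |A.rightSingularVector k ⬝ᵥ y|) := by
        refine Finset.sum_le_sum fun k _ => ?_
        rw [← abs_mul]
        exact (mul_le_mul_of_nonneg_left (le_abs_self _) (A.singularValue_nonneg k)).trans
          (mul_le_mul_of_nonneg_right (singularValue_le_svalI_zero A k) (abs_nonneg _))
    _ ≤ svalI A 0 * 1 := by
        rw [← Finset.mul_sum]
        exact mul_le_mul_of_nonneg_left
          (A.isBesselFamily_leftSingularVector.sum_abs_mul_abs_le_one
            A.isBesselFamily_rightSingularVector hx hy) (svalI_zero_nonneg A)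
    _ = svalI A 0 := mul_one _

theorem sum_dotProduct_mulVec_le_traceNorm {ι : Type*} [Fintype ι]
    (A : Matrix (Fin m) (Fin n) ℝ) {p : ι → Fin m → ℝ} {q : ι → Fin n → ℝ}
    (hp : IsBesselFamily p) (hq : IsBesselFamily q) :
    ∑ i, p i ⬝ᵥ (A *ᵥ q i) ≤ traceNorm A := by
  simp only [A.dotProduct_mulVec_eq_sum]
  rw [Finset.sum_comm, traceNorm_eq_sum_singularValue]
  refine Finset.sum_le_sum fun k _ => ?_
  rw [← Finset.mul_sum]
  refine mul_le_of_le_one_right (A.singularValue_nonneg k) ?_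
  calc _ ≤ ∑ i, |p i ⬝ᵥ A.leftSingularVector k| * |q i ⬝ᵥ A.rightSingularVector k| := by
        refine Finset.sum_le_sum fun i _ => ?_
        rw [← abs_mul, dotProduct_comm (p i), dotProduct_comm (q i)]
        exact le_abs_self _
    _ ≤ 1 := hp.sum_abs_mul_abs_le_one hq (A.leftSingularVector_dotProduct_self_le_one k)
        (A.rightSingularVector_dotProduct_self k).le

theorem traceNorm_eq_sum_dotProduct_mulVec (A : Matrix (Fin m) (Fin n) ℝ) :
    traceNorm A = ∑ k, A.leftSingularVector k ⬝ᵥ (A *ᵥ A.rightSingularVector k) := by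
  simp only [leftSingularVector_dotProduct_mulVec_rightSingularVector,
    traceNorm_eq_sum_singularValue]

theorem convexOn_traceNorm :
    ConvexOn ℝ Set.univ (traceNorm : Matrix (Fin m) (Fin n) ℝ → ℝ) := by
  refine ⟨convex_univ, fun X _ Y _ a b ha hb _ => ?_⟩
  set Z := a • X + b • Y
  rw [traceNorm_eq_sum_dotProduct_mulVec Z]
  simp only [Z, add_mulVec, smul_mulVec, dotProduct_add, dotProduct_smul, smul_eq_mul,
    Finset.sum_add_distrib, ← Finset.mul_sum]
  have hp := Z.isBesselFamily_leftSingularVector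
  have hq := Z.isBesselFamily_rightSingularVector
  gcongr
  exacts [sum_dotProduct_mulVec_le_traceNorm X hp hq, sum_dotProduct_mulVec_le_traceNorm Y hp hq]

theorem traceNorm_vecMulVec_le_one {x : Fin m → ℝ} {y : Fin n → ℝ} (hx : x ⬝ᵥ x ≤ 1)
    (hy : y ⬝ᵥ y ≤ 1) : traceNorm (vecMulVec x y) ≤ 1 := by
  set A := vecMulVec x y
  rw [traceNorm_eq_sum_dotProduct_mulVec]
  calc _ ≤ ∑ k, |A.leftSingularVector k ⬝ᵥ x| * |A.rightSingularVector k ⬝ᵥ y| := by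
        refine Finset.sum_le_sum fun k _ => ?_
        rw [vecMulVec_mulVec, op_smul_eq_smul, dotProduct_smul, smul_eq_mul, ← abs_mul,
          dotProduct_comm y, mul_comm]
        exact le_abs_self _
    _ ≤ 1 := A.isBesselFamily_leftSingularVector.sum_abs_mul_abs_le_one
        A.isBesselFamily_rightSingularVector hx hy

end TraceNorm

section Frobenius

variable {m n : ℕ}

theorem frobCLM_apply (G H : Matrix (Fin m) (Fin n) ℝ) : frobCLM G H = frobInner G H := rfl

theorem frobInner_comm (A B : Matrix (Fin m) (Fin n) ℝ) : frobInner A B = frobInner B A := by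
  simp only [frobInner, mul_comm]

theorem frobInner_vecMulVec (x : Fin m → ℝ) (y : Fin n → ℝ) (M : Matrix (Fin m) (Fin n) ℝ) :
    frobInner (vecMulVec x y) M = x ⬝ᵥ (M *ᵥ y) := by
  simp only [frobInner, vecMulVec_apply, dotProduct, mulVec, Finset.mul_sum]
  exact Finset.sum_congr rfl fun i _ => Finset.sum_congr rfl fun j _ => by ring

theorem frobInner_sub_nonneg_of_isMinOn {f : Matrix (Fin m) (Fin n) ℝ → ℝ}
    {G X W : Matrix (Fin m) (Fin n) ℝ} {s : Set (Matrix (Fin m) (Fin n) ℝ)}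
    (hf : HasFDerivAt f (frobCLM G) X) (hs : Convex ℝ s) (hX : X ∈ s) (hW : W ∈ s)
    (hmin : IsMinOn f s X) : 0 ≤ frobInner G (W - X) :=
  hmin.localize.hasFDerivWithinAt_nonneg hf.hasFDerivWithinAt
    (sub_mem_posTangentConeAt_of_segment_subset (hs.segment_subset hX hW))

end Frobenius

theorem eq_neg_of_sum_mul_le {ι : Type*} [Fintype ι] {w c : ι → ℝ} {s : ℝ}
    (hw : ∀ j, 0 < w j) (hc : ∀ j, -s ≤ c j) (hs : 0 ≤ s) (hw1 : ∑ j, w j ≤ 1)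
    (h : ∑ j, w j * c j ≤ -s) (i : ι) : c i = -s := by
  have hterm : ∀ j ∈ Finset.univ, 0 ≤ w j * (c j + s) := fun j _ =>
    mul_nonneg (hw j).le (by linarith [hc j])
  have hsum : ∑ j, w j * (c j + s) ≤ 0 := by
    have : ∑ j, w j * (c j + s) = ∑ j, w j * c j + s * ∑ j, w j := by
      rw [Finset.mul_sum, ← Finset.sum_add_distrib]
      exact Finset.sum_congr rfl fun j _ => by ring
    have := mul_le_mul_of_nonneg_left hw1 hs
    linarith
  have hi := (Finset.sum_eq_zero_iff_of_nonneg hterm).1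
    (hsum.antisymm (Finset.sum_nonneg hterm)) i (Finset.mem_univ i)
  linarith [(mul_eq_zero.1 hi).resolve_left (hw i).ne']

theorem stmt1_general {m n : ℕ} (f : Matrix (Fin m) (Fin n) ℝ → ℝ)
    (gradf : Matrix (Fin m) (Fin n) ℝ → Matrix (Fin m) (Fin n) ℝ)
    (hdiff : ∀ X, HasFDerivAt f (frobCLM (gradf X)) X)
    (Xstar : Matrix (Fin m) (Fin n) ℝ)
    (hfeas : traceNorm Xstar ≤ 1)
    (hopt : ∀ Z, traceNorm Z ≤ 1 → f Xstar ≤ f Z)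
    (r : ℕ) (u : Fin r → (Fin m → ℝ)) (v : Fin r → (Fin n → ℝ)) (σ : Fin r → ℝ)
    (hu : ∀ i j, ∑ k, u i k * u j k = if i = j then (1 : ℝ) else 0)
    (hv : ∀ i j, ∑ k, v i k * v j k = if i = j then (1 : ℝ) else 0)
    (hσpos : ∀ i, 0 < σ i)
    (hX : Xstar = ∑ i, σ i • Matrix.vecMulVec (u i) (v i)) :
    ∀ i, frobInner (Matrix.vecMulVec (u i) (v i)) (gradf Xstar)
      = - svalI (gradf Xstar) 0 := by
  set G := gradf Xstar
  have hu' : ∀ i j, u i ⬝ᵥ u j = if i = j then 1 else 0 := hu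
  have hv' : ∀ i j, v i ⬝ᵥ v j = if i = j then 1 else 0 := hv
  have hσX : ∀ j, u j ⬝ᵥ (Xstar *ᵥ v j) = σ j := fun j => by
    simp [hX, sum_mulVec, smul_mulVec, vecMulVec_mulVec, hu', hv']
  have hσsum : ∑ j, σ j ≤ 1 := by
    have := sum_dotProduct_mulVec_le_traceNorm Xstar (isBesselFamily_of_orthonormal hu')
      (isBesselFamily_of_orthonormal hv')
    simp only [hσX] at this
    linarith
  have hGX : frobInner G Xstar = ∑ j, σ j * frobInner (vecMulVec (u j) (v j)) G := by
    simp only [← frobCLM_apply, hX, map_sum, map_smul, smul_eq_mul]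
    simp only [frobCLM_apply, frobInner_comm G]
  obtain ⟨x, y, hx, hy, hxy⟩ := exists_dotProduct_mulVec_eq_svalI_zero G
  have hW : traceNorm (vecMulVec (-x) y) ≤ 1 := traceNorm_vecMulVec_le_one (by simpa using hx) hy
  have hGW : frobInner G (vecMulVec (-x) y) = -svalI G 0 := by
    rw [frobInner_comm, frobInner_vecMulVec, neg_dotProduct, hxy]
  have hfoc := frobInner_sub_nonneg_of_isMinOn (hdiff Xstar)
    (convexOn_traceNorm.convex_le 1) ⟨trivial, hfeas⟩ ⟨trivial, hW⟩ (fun Z hZ => hopt Z hZ.2)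
  rw [← frobCLM_apply, map_sub, frobCLM_apply, frobCLM_apply, hGW, hGX] at hfoc
  refine eq_neg_of_sum_mul_le hσpos (fun j => ?_) (svalI_zero_nonneg G) hσsum (by linarith)
  rw [frobInner_vecMulVec, ← neg_le_neg_iff, neg_neg, ← neg_dotProduct]
  exact dotProduct_mulVec_le_svalI_zero G (by simp [hu']) (by simp [hv'])

/-- If `X* = ∑_{i=1}^r σᵢ uᵢ vᵢᵀ` (σᵢ > 0) is an SVD of an optimal
solution `X*` of `min_{‖X‖_* ≤ 1} f(X)` for convex differentiable `f`, then for every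
`i`, `−uᵢᵀ ∇f(X*) vᵢ = σ₁(∇f(X*))`, i.e. each pair `(−uᵢ, vᵢ)` is a singular-vector
pair of `∇f(X*)` corresponding to its largest singular value. -/
theorem stmt1 {m n : ℕ} (f : Matrix (Fin m) (Fin n) ℝ → ℝ)
    (gradf : Matrix (Fin m) (Fin n) ℝ → Matrix (Fin m) (Fin n) ℝ)
    (hconv : ConvexOn ℝ Set.univ f)
    (hdiff : ∀ X, HasFDerivAt f (frobCLM (gradf X)) X)
    (Xstar : Matrix (Fin m) (Fin n) ℝ)
    (hfeas : traceNorm Xstar ≤ 1)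
    (hopt : ∀ Z, traceNorm Z ≤ 1 → f Xstar ≤ f Z)
    (r : ℕ) (u : Fin r → (Fin m → ℝ)) (v : Fin r → (Fin n → ℝ)) (σ : Fin r → ℝ)
    (hu : ∀ i j, ∑ k, u i k * u j k = if i = j then (1 : ℝ) else 0)
    (hv : ∀ i j, ∑ k, v i k * v j k = if i = j then (1 : ℝ) else 0)
    (hσpos : ∀ i, 0 < σ i)
    (hX : Xstar = ∑ i, σ i • Matrix.vecMulVec (u i) (v i)) :
    ∀ i, frobInner (Matrix.vecMulVec (u i) (v i)) (gradf Xstar)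
      = - svalI (gradf Xstar) 0 :=
  stmt1_general f gradf hdiff Xstar hfeas hopt r u v σ hu hv hσpos hX
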